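/- arXiv:2411.00391 — 4 statements merged into one kernel-verified Lean document; each statement's English description precedes it below -/
import Mathlib

section
/- Let 0 < ε < 1 and φ > −6·ln(ε). Then δ = (−3·ln ε + √((ln ε)² − 8·φ·ln ε)) / (2·(φ + ln ε)) satisfies 0 < δ < 1 and solves e^(−(δ²/(2+δ))·(φ/(1+δ))) = ε. -/
theorem symmetric_analytical_bound (ε φ : ℝ) (hε0 : 0 < ε) (hε1 : ε < 1)
    (hφ : φ > -6 * Real.log ε)
    (δ : ℝ)
    (hδ : δ = (-3 * Real.log ε + Real.sqrt ((Real.log ε) ^ 2 - 8 * φ * Real.log ε)) /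
      (2 * (φ + Real.log ε))) :
    0 < δ ∧ δ < 1 ∧ Real.exp (-(δ ^ 2 / (2 + δ)) * (φ / (1 + δ))) = ε := by
  set L := Real.log ε with hLdef
  have hL : L < 0 := Real.log_neg hε0 hε1
  have hDen : 0 < φ + L := by linarith
  set s := Real.sqrt (L ^ 2 - 8 * φ * L) with hsdef
  have harg : 0 ≤ L ^ 2 - 8 * φ * L := by nlinarith
  have hs0 : 0 ≤ s := Real.sqrt_nonneg _
  have hs2 : s ^ 2 = L ^ 2 - 8 * φ * L := Real.sq_sqrt harg
  have hδeq : δ * (2 * (φ + L)) = -3 * L + s := by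
    rw [hδ]; field_simp
  have hδ0 : 0 < δ := by
    have : 0 < -3 * L + s := by nlinarith
    have := hδ
    rw [hδ]
    positivity
  have hδ1 : δ < 1 := by
    have hy : 0 < 2 * φ + 5 * L := by linarith
    have hslt : s < 2 * φ + 5 * L := by
      have : s ^ 2 < (2 * φ + 5 * L) ^ 2 := by nlinarith
      nlinarith
    have : δ * (2 * (φ + L)) < 1 * (2 * (φ + L)) := by
      rw [hδeq]; nlinarith
    exact lt_of_mul_lt_mul_right this (by linarith)
  refine ⟨hδ0, hδ1, ?_⟩
  have hsq : (δ * (2 * (φ + L))) ^ 2 = (-3 * L + s) ^ 2 := by rw [hδeq]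
  have hq4 : ((φ + L) * δ ^ 2 + 3 * L * δ + 2 * L) * (4 * (φ + L) ^ 2) = 0 := by
    linear_combination (φ + L) * hsq + 6 * L * (φ + L) * hδeq + (φ + L) * hs2
  have hq : (φ + L) * δ ^ 2 + 3 * L * δ + 2 * L = 0 := by
    rcases mul_eq_zero.mp hq4 with h | h
    · exact h
    · nlinarith
  have hexp : -(δ ^ 2 / (2 + δ)) * (φ / (1 + δ)) = L := by
    have h2 : (2 : ℝ) + δ ≠ 0 := by linarith
    have h1 : (1 : ℝ) + δ ≠ 0 := by linarith
    field_simp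
    linear_combination -hq
  rw [hexp, hLdef, Real.exp_log hε0]
end

section
/- Let μ > ν > 0, Y₀ ≥ 0, Q_μ, Q_ν ≥ 0, and suppose Yᵢ ∈ [0,1] for all i with Q_μ·e^μ = Σᵢ μⁱ Yᵢ / i! and Q_ν·e^ν = Σᵢ νⁱ Yᵢ / i!. Then Y₁ ≥ (1/(μν(μ−ν)))·(μ²·Q_ν·e^ν − ν²·Q_μ·e^μ − (μ² − ν²)·Y₀). -/
/-!
Combine the two Poisson-weighted series as `μ² · (ν-series) − ν² · (μ-series)`: the
coefficient `μ²νⁱ − ν²μⁱ = μ²ν²(νⁱ⁻² − μⁱ⁻²)` vanishes for `i = 2` and is nonpositive for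
every `i ≥ 2`, so with nonnegative yields only the terms `i = 0, 1` can make the
combination positive. Solving the resulting inequality for `Y₁` gives the bound.
-/

lemma sq_mul_pow_add_two_sub_le_zero {μ ν : ℝ} (hν : 0 ≤ ν) (hνμ : ν ≤ μ) (n : ℕ) :
    μ ^ 2 * ν ^ (n + 2) - ν ^ 2 * μ ^ (n + 2) ≤ 0 :=
  calc μ ^ 2 * ν ^ (n + 2) - ν ^ 2 * μ ^ (n + 2) = μ ^ 2 * ν ^ 2 * (ν ^ n - μ ^ n) := by ring
    _ ≤ 0 := mul_nonpos_of_nonneg_of_nonpos (by positivity)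
      (sub_nonpos.mpr (pow_le_pow_left₀ hν hνμ n))

lemma sq_mul_hasSum_sub_le {μ ν Sμ Sν : ℝ} {a : ℕ → ℝ} (hν : 0 ≤ ν) (hνμ : ν ≤ μ)
    (ha : ∀ i, 0 ≤ a i) (hSμ : HasSum (fun i => μ ^ i * a i) Sμ)
    (hSν : HasSum (fun i => ν ^ i * a i) Sν) :
    μ ^ 2 * Sν - ν ^ 2 * Sμ ≤ (μ ^ 2 - ν ^ 2) * a 0 + μ * ν * (μ - ν) * a 1 := by
  set f : ℕ → ℝ := fun i => (μ ^ 2 * ν ^ i - ν ^ 2 * μ ^ i) * a i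
  have hf : HasSum f (μ ^ 2 * Sν - ν ^ 2 * Sμ) := by
    have hcomb := (hSν.mul_left (μ ^ 2)).sub (hSμ.mul_left (ν ^ 2))
    have hfun : f = fun i => μ ^ 2 * (ν ^ i * a i) - ν ^ 2 * (μ ^ i * a i) := by
      funext i
      ring
    rwa [hfun]
  have htail : HasSum (fun n => f (n + 2)) (μ ^ 2 * Sν - ν ^ 2 * Sμ - ∑ i ∈ Finset.range 2, f i) :=
    (hasSum_nat_add_iff' 2).mpr hf
  have htail_nonpos : μ ^ 2 * Sν - ν ^ 2 * Sμ - ∑ i ∈ Finset.range 2, f i ≤ 0 :=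
    hasSum_le (fun n => mul_nonpos_of_nonpos_of_nonneg
      (sq_mul_pow_add_two_sub_le_zero hν hνμ n) (ha (n + 2))) htail hasSum_zero
  have hhead : ∑ i ∈ Finset.range 2, f i = (μ ^ 2 - ν ^ 2) * a 0 + μ * ν * (μ - ν) * a 1 := by
    simp only [f, Finset.sum_range_succ, Finset.sum_range_zero]
    ring
  linarith

theorem decoy_Y1_lower_bound_general (μ ν Qμ Qν : ℝ) (Y : ℕ → ℝ)
    (hν : 0 < ν) (hμν : ν < μ)
    (hY : ∀ i, Y i ∈ Set.Icc (0 : ℝ) 1)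
    (hsμ : HasSum (fun i => μ ^ i * Y i / (Nat.factorial i : ℝ)) (Qμ * Real.exp μ))
    (hsν : HasSum (fun i => ν ^ i * Y i / (Nat.factorial i : ℝ)) (Qν * Real.exp ν)) :
    Y 1 ≥ (1 / (μ * ν * (μ - ν))) *
      (μ ^ 2 * Qν * Real.exp ν - ν ^ 2 * Qμ * Real.exp μ - (μ ^ 2 - ν ^ 2) * Y 0) := by
  have hbound := sq_mul_hasSum_sub_le (a := fun i => Y i / (Nat.factorial i : ℝ)) hν.le hμν.le
    (fun i => div_nonneg (hY i).1 (Nat.cast_nonneg _))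
    (by simpa only [mul_div_assoc] using hsμ) (by simpa only [mul_div_assoc] using hsν)
  simp only [Nat.factorial_zero, Nat.factorial_one, Nat.cast_one, div_one] at hbound
  have hc : 0 < μ * ν * (μ - ν) := mul_pos (mul_pos (hν.trans hμν) hν) (sub_pos.mpr hμν)
  rw [ge_iff_le, one_div, inv_mul_le_iff₀ hc]
  linarith

theorem decoy_Y1_lower_bound (μ ν Qμ Qν : ℝ) (Y : ℕ → ℝ)
    (hν : 0 < ν) (hμν : ν < μ)
    (hQμ : 0 ≤ Qμ) (hQν : 0 ≤ Qν)
    (hY : ∀ i, Y i ∈ Set.Icc (0 : ℝ) 1)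
    (hsμ : HasSum (fun i => μ ^ i * Y i / (Nat.factorial i : ℝ)) (Qμ * Real.exp μ))
    (hsν : HasSum (fun i => ν ^ i * Y i / (Nat.factorial i : ℝ)) (Qν * Real.exp ν)) :
    Y 1 ≥ (1 / (μ * ν * (μ - ν))) *
      (μ ^ 2 * Qν * Real.exp ν - ν ^ 2 * Qμ * Real.exp μ - (μ ^ 2 - ν ^ 2) * Y 0) :=
  decoy_Y1_lower_bound_general μ ν Qμ Qν Y hν hμν hY hsμ hsν
end

section
/- Define G(x) = (C₁ − 2z + x)·(1 − h((C₂ − z + x)/(C₁ − 2z + x))) where C₁, C₂, z are constants with C₁ − 2z + x > 0 and e₁(x) := (C₂ − z + x)/(C₁ − 2z + x) ∈ (0, 1/2). Then dG/dx = 1 + log₂(e₁(x)) < 0, i.e., G is strictly decreasing in x on this domain. -/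
/-!
Write `D = C₁ - 2z + x` and `e = (C₂ - z + x) / D`; both numerator and denominator of `e` grow
at unit rate, so `e' = (1 - e) / D`. With `h' e = log₂ ((1 - e) / e)` the product rule gives
`G' = 1 - h e - (1 - e) log₂ ((1 - e) / e)`, and expanding `h e` everything cancels except
`1 + log₂ e`, which is negative because `e < 1/2`.
-/

noncomputable def binEnt (x : ℝ) : ℝ :=
  -x * Real.logb 2 x - (1 - x) * Real.logb 2 (1 - x)

open Real

theorem binEnt_eq_binEntropy_div_log_two (p : ℝ) : binEnt p = binEntropy p / log 2 := by
  simp only [binEnt, binEntropy, logb, log_inv]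
  ring

theorem hasDerivAt_binEnt {p : ℝ} (hp₀ : p ≠ 0) (hp₁ : p ≠ 1) :
    HasDerivAt binEnt (logb 2 (1 - p) - logb 2 p) p := by
  have h := (hasDerivAt_binEntropy hp₀ hp₁).div_const (log 2)
  rw [← funext binEnt_eq_binEntropy_div_log_two] at h
  exact h.congr_deriv (by simp only [logb]; ring)

theorem hasDerivAt_add_div_add (a b x : ℝ) (hb : b + x ≠ 0) :
    HasDerivAt (fun x' => (a + x') / (b + x')) ((1 - (a + x) / (b + x)) / (b + x)) x := by
  have h : HasDerivAt (fun x' => (a + x') / (b + x')) _ x :=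
    ((hasDerivAt_id' x).const_add a).div ((hasDerivAt_id' x).const_add b) hb
  exact h.congr_deriv (by field_simp)

theorem hasDerivAt_mul_one_sub_binEnt_add_div_add (a b x : ℝ)
    (he₀ : (a + x) / (b + x) ≠ 0) (he₁ : (a + x) / (b + x) ≠ 1) :
    HasDerivAt (fun x' => (b + x') * (1 - binEnt ((a + x') / (b + x'))))
      (1 + logb 2 ((a + x) / (b + x))) x := by
  -- a zero denominator would make the ratio `0`
  have hb : b + x ≠ 0 := fun h => he₀ (by rw [h, div_zero])
  have he := (hasDerivAt_binEnt he₀ he₁).comp x (hasDerivAt_add_div_add a b x hb)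
  have hG : HasDerivAt (fun x' => (b + x') * (1 - binEnt ((a + x') / (b + x')))) _ x :=
    ((hasDerivAt_id' x).const_add b).mul (he.const_sub 1)
  refine hG.congr_deriv ?_
  simp only [binEnt]
  field_simp
  ring

theorem one_add_logb_two_neg {p : ℝ} (hp₀ : 0 < p) (hp : p < 1 / 2) : 1 + logb 2 p < 0 := by
  have h := logb_lt_logb one_lt_two hp₀ hp
  rw [one_div, logb_inv, logb_self_eq_one one_lt_two] at h
  linarith

theorem derivative_G_neg_general (C₁ C₂ z x : ℝ)
    (e₁ : ℝ) (he₁def : e₁ = (C₂ - z + x) / (C₁ - 2 * z + x))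
    (he₁ : e₁ ∈ Set.Ioo (0 : ℝ) (1 / 2)) :
    HasDerivAt (fun x' => (C₁ - 2 * z + x') *
        (1 - binEnt ((C₂ - z + x') / (C₁ - 2 * z + x'))))
      (1 + Real.logb 2 e₁) x ∧ 1 + Real.logb 2 e₁ < 0 := by
  obtain ⟨he₀, he_half⟩ := he₁
  subst he₁def
  exact ⟨hasDerivAt_mul_one_sub_binEnt_add_div_add _ _ x he₀.ne' (by linarith),
    one_add_logb_two_neg he₀ he_half⟩

theorem derivative_G_neg (C₁ C₂ z x : ℝ)
    (hDx : 0 < C₁ - 2 * z + x)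
    (e₁ : ℝ) (he₁def : e₁ = (C₂ - z + x) / (C₁ - 2 * z + x))
    (he₁ : e₁ ∈ Set.Ioo (0 : ℝ) (1 / 2)) :
    HasDerivAt (fun x' => (C₁ - 2 * z + x') *
        (1 - binEnt ((C₂ - z + x') / (C₁ - 2 * z + x'))))
      (1 + Real.logb 2 e₁) x ∧ 1 + Real.logb 2 e₁ < 0 :=
  derivative_G_neg_general C₁ C₂ z x e₁ he₁def he₁
end

section
/- For μ > ν > 0, the sequence i ↦ (μ^{i−2} − ν^{i−2})/(μ^{i−1} − ν^{i−1}) is strictly monotonically increasing for i ≥ 3. -/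
theorem ratio_strict_mono (μ ν : ℝ) (hν : 0 < ν) (hμν : ν < μ) :
    ∀ i : ℕ, 3 ≤ i →
      (μ ^ (i - 2) - ν ^ (i - 2)) / (μ ^ (i - 1) - ν ^ (i - 1)) <
        (μ ^ (i + 1 - 2) - ν ^ (i + 1 - 2)) / (μ ^ (i + 1 - 1) - ν ^ (i + 1 - 1)) := by
  intro i hi
  have hμ : 0 < μ := hν.trans hμν
  obtain ⟨k, rfl⟩ : ∃ k, i = k + 3 := ⟨i - 3, by omega⟩
  have hpow : ∀ n : ℕ, 0 < μ ^ (n + 1) - ν ^ (n + 1) := by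
    intro n
    have := pow_lt_pow_left₀ hμν hν.le (n := n + 1) (by omega)
    linarith
  have e1 : k + 3 - 2 = k + 1 := by omega
  have e2 : k + 3 - 1 = k + 2 := by omega
  have e3 : k + 3 + 1 - 2 = k + 2 := by omega
  have e4 : k + 3 + 1 - 1 = k + 3 := by omega
  have hd1 : 0 < μ ^ (k + 2) - ν ^ (k + 2) := by simpa using hpow (k + 1)
  have hd2 : 0 < μ ^ (k + 3) - ν ^ (k + 3) := by simpa using hpow (k + 2)
  rw [e1, e2, e3, e4, div_lt_div_iff₀ hd1 hd2]
  have hk : 0 < μ ^ k * ν ^ k := mul_pos (pow_pos hμ k) (pow_pos hν k)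
  have hsq : 0 < (μ - ν) ^ 2 := pow_pos (sub_pos.mpr hμν) 2
  simp only [pow_succ]
  nlinarith [mul_pos (mul_pos hk (mul_pos hμ hν)) hsq]
end
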